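/- arXiv:1511.01045 — 5 statements merged into one kernel-verified Lean document; each statement's English description precedes it below -/
import Mathlib

section
/- Every countable Hausdorff topological group G has a subset A that is closed and discrete (in the topology of G) such that G = AA⁻¹, i.e., every element of G is a product a·b⁻¹ with a, b ∈ A. -/
/-!
Enumerate `G = {xₙ}`. If `aₙ` and `bₙ = xₙ⁻¹ aₙ` avoid `xₖ Uₖ` for all `k ≤ n`, where the `Uₖ`
are neighbourhoods of `1`, then `A = {aₙ} ∪ {bₙ}` meets each `xₖ Uₖ` in finitely many points, so
it is closed and discrete, and `xₙ = aₙ bₙ⁻¹`. Finitely many translates of a fixed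
neighbourhood may cover `G`, so the `Uₖ` have to shrink: in a non-discrete group there are
nested neighbourhoods `Kₙ` of `1` and points `zₙ` with `zₙ Kₙ₊₁ ⊆ Kₙ` such that every
translate of `Kₙ₊₁` misses `Kₙ₊₁` or `zₙ Kₙ₊₁`. Descending along `y Kₙ ⊇ y' Kₙ₊₁` then avoids
one prescribed translate per level.
-/

open Pointwise Set Filter Topology

theorem isClosed_and_isDiscrete_of_finite_inter_nhds {X : Type*} [TopologicalSpace X] [T1Space X]
    {A : Set X} (h : ∀ x, ∃ t ∈ 𝓝 x, (t ∩ A).Finite) : IsClosed A ∧ IsDiscrete A := by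
  rw [← compl_mem_codiscrete_iff, codiscrete, codiscreteWithin_iff_locallyFiniteComplementWithin]
  exact fun x _ => by simpa using h x

section Descent

variable {G : Type*} [Group G]

theorem exists_smul_disjoint_of_forall_disjoint_or {K : ℕ → Set G} {z : ℕ → G}
    (hK : ∀ n, K (n + 1) ⊆ K n) (hz : ∀ n, z n • K (n + 1) ⊆ K n)
    (hsplit : ∀ n (c : G),
      Disjoint (c • K (n + 1)) (K (n + 1)) ∨ Disjoint (c • K (n + 1)) (z n • K (n + 1)))
    (c : ℕ → G) (n : ℕ) : ∃ y : G, ∀ j < n, Disjoint (c j • K (j + 1)) (y • K n) := by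
  induction n with
  | zero => exact ⟨1, by simp⟩
  | succ n ih =>
    obtain ⟨y, hy⟩ := ih
    obtain ⟨w, hwK, hw⟩ : ∃ w : G, w • K (n + 1) ⊆ K n ∧
        Disjoint ((y⁻¹ * c n) • K (n + 1)) (w • K (n + 1)) := by
      rcases hsplit n (y⁻¹ * c n) with h | h
      · exact ⟨1, by simpa using hK n, by simpa using h⟩
      · exact ⟨z n, hz n, h⟩
    have hsub : (y * w) • K (n + 1) ⊆ y • K n := by
      rw [mul_smul]; exact smul_set_mono hwK
    refine ⟨y * w, fun j hj => ?_⟩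
    rcases Nat.lt_succ_iff_lt_or_eq.mp hj with hj | rfl
    · exact (hy j hj).mono_right hsub
    · rwa [mul_smul, disjoint_smul_set_right, smul_smul]

end Descent

section Nondiscrete

variable {G : Type*} [Group G] [TopologicalSpace G] [IsTopologicalGroup G] [T1Space G]
  [(𝓝[≠] (1 : G)).NeBot]

theorem exists_nhds_one_smul_disjoint_or {K : Set G} (hK : K ∈ 𝓝 1) :
    ∃ L ∈ 𝓝 (1 : G), ∃ z : G, L ⊆ K ∧ z • L ⊆ K ∧
      ∀ c : G, Disjoint (c • L) L ∨ Disjoint (c • L) (z • L) := by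
  obtain ⟨M, hM, hMK⟩ := exists_nhds_one_split hK
  obtain ⟨z, hz1, hzM⟩ : ∃ z, z ∈ ({1}ᶜ : Set G) ∩ M :=
    Filter.nonempty_of_mem (inter_mem_nhdsWithin _ hM)
  obtain ⟨N, hN, hNz⟩ := exists_nhds_split_inv (isOpen_compl_singleton.mem_nhds (Ne.symm hz1))
  obtain ⟨L, hL, hLNM⟩ := exists_nhds_split_inv (inter_mem hN hM)
  have hLM : L ⊆ M := fun l hl => by simpa using (hLNM l hl 1 (mem_of_mem_nhds hL)).2
  refine ⟨L, hL, z, fun l hl => ?_, ?_, fun c => ?_⟩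
  · simpa using hMK l (hLM hl) 1 (mem_of_mem_nhds hM)
  · rintro _ ⟨l, hl, rfl⟩
    exact hMK z hzM l (hLM hl)
  · -- if `c • L` met both `L` and `z • L`, then `z` would lie in `(L / L) / (L / L)`
    by_contra! h
    obtain ⟨_, ⟨l₁, hl₁, rfl⟩, hl₂⟩ := not_disjoint_iff.mp h.1
    obtain ⟨_, ⟨l₃, hl₃, rfl⟩, l₄, hl₄, hl₃₄⟩ := not_disjoint_iff.mp h.2
    apply hNz _ (hLNM _ hl₂ l₁ hl₁).1 _ (hLNM l₄ hl₄ l₃ hl₃).1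
    simp only [smul_eq_mul, mem_singleton_iff] at hl₃₄ ⊢
    calc c * l₁ / l₁ / (l₄ / l₃) = c * l₃ * l₄⁻¹ := by simp [div_eq_mul_inv, mul_assoc]
      _ = z := by rw [← hl₃₄]; group

theorem exists_seq_nhds_one_smul_disjoint_or :
    ∃ (K : ℕ → Set G) (z : ℕ → G), (∀ n, K n ∈ 𝓝 1) ∧ (∀ n, K (n + 1) ⊆ K n) ∧
      (∀ n, z n • K (n + 1) ⊆ K n) ∧
      ∀ n (c : G), Disjoint (c • K (n + 1)) (K (n + 1)) ∨
        Disjoint (c • K (n + 1)) (z n • K (n + 1)) := by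
  choose! L hL z hLK hzK hsplit using
    fun K (hK : K ∈ 𝓝 (1 : G)) => exists_nhds_one_smul_disjoint_or hK
  set K : ℕ → Set G := fun n => L^[n] univ
  have hK : ∀ n, K n ∈ 𝓝 1 := by
    intro n
    induction n with
    | zero => exact univ_mem
    | succ n ih => simpa [K, Function.iterate_succ_apply'] using hL _ ih
  refine ⟨K, fun n => z (K n), hK, fun n => ?_, fun n => ?_, fun n => ?_⟩ <;>
    simp only [K, Function.iterate_succ_apply']
  exacts [hLK _ (hK n), hzK _ (hK n), hsplit _ (hK n)]

theorem exists_nhds_one_seq_forall_le_notMem_smul (x : ℕ → G) :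
    ∃ (U : ℕ → Set G) (a : ℕ → G), (∀ k, U k ∈ 𝓝 1) ∧
      ∀ k n, k ≤ n → a n ∉ x k • U k ∧ (x n)⁻¹ * a n ∉ x k • U k := by
  obtain ⟨K, z, hK, hKsub, hz, hsplit⟩ := exists_seq_nhds_one_smul_disjoint_or (G := G)
  have key : ∀ n, ∃ a : G, ∀ k ≤ n,
      a ∉ x k • K (2 * k + 2) ∧ (x n)⁻¹ * a ∉ x k • K (2 * k + 2) := by
    intro n
    -- avoid `x k • K (2k+1)` at level `2k` and `(x n * x k) • K (2k+2)` at level `2k+1`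
    set c : ℕ → G := fun j => if Even j then x (j / 2) else x n * x (j / 2)
    obtain ⟨y, hy⟩ := exists_smul_disjoint_of_forall_disjoint_or hKsub hz hsplit c (2 * n + 2)
    have hy_mem : y ∈ y • K (2 * n + 2) := by
      simpa using smul_mem_smul_set (a := y) (mem_of_mem_nhds (hK _))
    have hyc : ∀ j < 2 * n + 2, y ∉ c j • K (j + 1) := fun j hj hmem =>
      (hy j hj).ne_of_mem hmem hy_mem rfl
    refine ⟨y, fun k hk => ⟨fun h => hyc (2 * k) (by omega) ?_,
      fun h => hyc (2 * k + 1) (by omega) ?_⟩⟩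
    · simpa [c] using smul_set_mono (hKsub _) h
    · have hc : c (2 * k + 1) = x n * x k := by simp [c, show (2 * k + 1) / 2 = k by omega]
      rw [mem_smul_set_iff_inv_smul_mem] at h
      rwa [hc, mem_smul_set_iff_inv_smul_mem, mul_inv_rev, smul_eq_mul, mul_assoc]
  choose a ha using key
  exact ⟨fun k => K (2 * k + 2), a, fun k => hK _, fun k n hk => ha n k hk⟩

end Nondiscrete

/-- Every countable Hausdorff topological group `G` has a closed discrete subset `A`
such that `G = A * A⁻¹`. -/
theorem countable_group_eq_mul_inv_of_closed_discrete
    (G : Type*) [Group G] [TopologicalSpace G] [IsTopologicalGroup G]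
    [T2Space G] [Countable G] :
    ∃ A : Set G, IsClosed A ∧ DiscreteTopology A ∧ A * A⁻¹ = Set.univ := by
  by_cases hG : (𝓝[≠] (1 : G)).NeBot
  swap
  · have : DiscreteTopology G := discreteTopology_of_isOpen_singleton_one
      ((isOpen_singleton_iff_punctured_nhds 1).mpr (not_neBot.mp hG))
    exact ⟨univ, isClosed_univ, inferInstance, by simp⟩
  obtain ⟨x, hx⟩ := exists_surjective_nat G
  obtain ⟨U, a, hU, ha⟩ := exists_nhds_one_seq_forall_le_notMem_smul x
  set b : ℕ → G := fun n => (x n)⁻¹ * a n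
  have hfin : ∀ p, ∃ t ∈ 𝓝 p, (t ∩ (range a ∪ range b)).Finite := by
    intro p
    obtain ⟨k, rfl⟩ := hx p
    refine ⟨x k • U k, smul_mem_nhds_self.mpr (hU k),
      (((finite_Iio k).image a).union ((finite_Iio k).image b)).subset ?_⟩
    rintro _ ⟨hmem, ⟨n, rfl⟩ | ⟨n, rfl⟩⟩
    · exact Or.inl ⟨n, not_le.mp fun hkn => (ha k n hkn).1 hmem, rfl⟩
    · exact Or.inr ⟨n, not_le.mp fun hkn => (ha k n hkn).2 hmem, rfl⟩
  obtain ⟨hclosed, hdiscrete⟩ := isClosed_and_isDiscrete_of_finite_inter_nhds hfin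
  refine ⟨_, hclosed, hdiscrete.to_subtype, eq_univ_of_forall fun p => ?_⟩
  obtain ⟨n, rfl⟩ := hx p
  exact ⟨a n, .inl ⟨n, rfl⟩, (b n)⁻¹, inv_mem_inv.mpr (.inr ⟨n, rfl⟩), by simp [b]⟩
end

section
/- Let G be a countable Hausdorff topological group that is not totally bounded, i.e., there exists a neighborhood U of the identity such that G ≠ FU for every finite subset F of G. Then G has a closed discrete subset A such that G = AA⁻¹. -/
/-!
Enumerate `G = {g₀, g₁, …}` and let `U` be a neighbourhood of `1` no finitely many translates of
which cover `G`. At stage `n` pick `aₙ` outside the finitely many translates `gₘU` and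
`gₙ⁻¹gₘU` with `m ≤ n`, and put `bₙ = gₙaₙ`. Then neither `aₙ` nor `bₙ` lies in `gₘU` once
`n ≥ m`, so each neighbourhood `gₘU` of `gₘ` meets `A = {aₙ} ∪ {bₙ}` in a finite set, which makes
`A` closed and discrete; and `gₙ = bₙaₙ⁻¹ ∈ AA⁻¹`.
-/

open Pointwise Filter Set Topology

theorem isClosed_and_discreteTopology_of_forall_finite_inter {X : Type*} [TopologicalSpace X]
    [T1Space X] {A : Set X} (h : ∀ x, ∃ V ∈ 𝓝 x, (V ∩ A).Finite) :
    IsClosed A ∧ DiscreteTopology A := by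
  rw [← isDiscrete_iff_discreteTopology, isClosed_and_discrete_iff]
  intro x
  obtain ⟨V, hV, hfin⟩ := h x
  have hclosed : IsClosed ((V ∩ A) \ {x}) := hfin.sdiff.isClosed
  rw [disjoint_principal_right]
  filter_upwards [nhdsWithin_le_nhds (inter_mem hV (hclosed.isOpen_compl.mem_nhds (by simp))),
    self_mem_nhdsWithin] with y ⟨hyV, hy⟩ hyx hyA
  exact hy ⟨⟨hyV, hyA⟩, hyx⟩

section

variable {G : Type*} [Group G]

theorem finite_smul_inter_range_of_forall_le_notMem {U : Set G} {g c : ℕ → G}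
    (hc : ∀ ⦃m n⦄, m ≤ n → c n ∉ g m • U) (m : ℕ) : (g m • U ∩ range c).Finite :=
  ((finite_Iio m).image c).subset <| by
    rintro _ ⟨hy, n, rfl⟩
    exact ⟨n, lt_of_not_ge fun hmn => hc hmn hy, rfl⟩

theorem exists_seq_forall_le_notMem_smul {U : Set G}
    (hU : ∀ F : Finset G, (F : Set G) * U ≠ univ) (g : ℕ → G) :
    ∃ a : ℕ → G, ∀ ⦃m n⦄, m ≤ n → a n ∉ g m • U ∧ g n * a n ∉ g m • U := by
  classical
  have hF (n : ℕ) : ∃ x, x ∉ ((((Finset.range (n + 1)).image g ∪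
      (Finset.range (n + 1)).image ((g n)⁻¹ * g ·) : Finset G)) : Set G) * U := by
    simpa only [ne_eq, eq_univ_iff_forall, not_forall] using hU _
  choose a ha using hF
  refine ⟨a, fun m n hmn => ⟨fun h => ha n (smul_set_subset_mul ?_ h),
    fun h => ha n (smul_set_subset_mul (a := (g n)⁻¹ * g m) ?_ ?_)⟩⟩
  · simp only [Finset.coe_union, Finset.coe_image, Finset.coe_range]
    exact .inl ⟨m, by simpa using Nat.lt_succ_of_le hmn, rfl⟩
  · simp only [Finset.coe_union, Finset.coe_image, Finset.coe_range]
    exact .inr ⟨m, by simpa using Nat.lt_succ_of_le hmn, rfl⟩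
  · rw [mem_smul_set_iff_inv_smul_mem] at h ⊢
    simpa [mul_assoc] using h

end

/-- A countable Hausdorff topological group that is not totally bounded
(there is a neighborhood `U` of the identity with `G ≠ F * U` for every finite `F`)
has a closed discrete subset `A` with `G = A * A⁻¹`. -/
theorem not_totally_bounded_countable_group_eq_mul_inv
    (G : Type*) [Group G] [TopologicalSpace G] [IsTopologicalGroup G]
    [T2Space G] [Countable G]
    (hU : ∃ U ∈ nhds (1 : G), ∀ F : Finset G, (F : Set G) * U ≠ Set.univ) :
    ∃ A : Set G, IsClosed A ∧ DiscreteTopology A ∧ A * A⁻¹ = Set.univ := by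
  obtain ⟨U, hU1, hUF⟩ := hU
  obtain ⟨g, hg⟩ := exists_surjective_nat G
  obtain ⟨a, ha⟩ := exists_seq_forall_le_notMem_smul hUF g
  have hfin (x : G) : ∃ V ∈ 𝓝 x, (V ∩ (range (fun n => g n * a n) ∪ range a)).Finite := by
    obtain ⟨m, rfl⟩ := hg x
    refine ⟨g m • U, by simpa using smul_mem_nhds_smul (g m) hU1, ?_⟩
    rw [inter_union_distrib_left]
    exact (finite_smul_inter_range_of_forall_le_notMem (fun _ _ h => (ha h).2) m).union
      (finite_smul_inter_range_of_forall_le_notMem (fun _ _ h => (ha h).1) m)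
  obtain ⟨hclosed, hdiscrete⟩ := isClosed_and_discreteTopology_of_forall_finite_inter hfin
  refine ⟨_, hclosed, hdiscrete, eq_univ_of_forall fun x => ?_⟩
  obtain ⟨n, rfl⟩ := hg x
  exact ⟨g n * a n, .inl ⟨n, rfl⟩, (a n)⁻¹, inv_mem_inv.mpr (.inr ⟨n, rfl⟩),
    mul_inv_cancel_right _ _⟩
end

section
/- Let H be a compact Hausdorff topological group and let G be a countable dense subgroup of H, endowed with the subspace topology. Then G has a subset A that is closed and discrete in G such that G = AA⁻¹. -/
/-!
Enumerate `G = {e₀, e₁, …}` and let `μ` be a Haar measure on `H`.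
If `H` is not discrete, `μ` has no atoms, so each `eₙ` has a closed neighbourhood `Kₙ` with
`∑ μ Kₙ < μ H / 2`. Then `Cₙ = K₀ ∪ ⋯ ∪ Kₙ` satisfies `μ (Cₙ ∪ eₙ Cₙ) < μ H`, so the dense subgroup
`G` meets the open complement of `Cₙ ∪ eₙ Cₙ` in some `aₙ`. With `bₙ = eₙ⁻¹ aₙ` we get
`eₙ = aₙ bₙ⁻¹`, and since `aₘ, bₘ ∉ Kₙ` for `m ≥ n`, every `eₙ` has a neighbourhood containing only
finitely many of the `aₘ, bₘ`: the set `A = {aₙ} ∪ {bₙ}` is closed and discrete in `G`.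
If `H` is discrete, `A = G` works.
-/

open Pointwise Set Filter Topology MeasureTheory
open scoped ENNReal

theorem isClosed_and_isDiscrete_range_of_eventually_notMem {X : Type*} [TopologicalSpace X]
    [T1Space X] {f : ℕ → X} (h : ∀ x, ∃ V ∈ 𝓝 x, ∀ᶠ n in atTop, f n ∉ V) :
    IsClosed (range f) ∧ IsDiscrete (range f) := by
  rw [← compl_mem_codiscrete_iff, codiscrete, codiscreteWithin_iff_locallyFiniteComplementWithin]
  intro x _
  obtain ⟨V, hV, hfV⟩ := h x
  obtain ⟨N, hN⟩ := eventually_atTop.1 hfV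
  refine ⟨V, hV, ((finite_Iio N).image f).subset ?_⟩
  rintro _ ⟨hyV, -, hy⟩
  obtain ⟨n, rfl⟩ := not_notMem.1 hy
  exact ⟨n, not_le.1 fun hn => hN n hn hyV, rfl⟩

theorem exists_isClosed_isDiscrete_mul_inv_eq_univ {G : Type*} [Group G] [TopologicalSpace G]
    [T1Space G] {e : ℕ → G} (he : Function.Surjective e) {K : ℕ → Set G}
    (hK : ∀ n, K n ∈ 𝓝 (e n))
    (havoid : ∀ n, ∃ x, x ∉ ⋃ i ≤ n, K i ∧ (e n)⁻¹ * x ∉ ⋃ i ≤ n, K i) :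
    ∃ A : Set G, IsClosed A ∧ IsDiscrete A ∧ A * A⁻¹ = univ := by
  choose a ha hb using havoid
  have hrange (f : ℕ → G) (hf : ∀ n, f n ∉ ⋃ i ≤ n, K i) :
      IsClosed (range f) ∧ IsDiscrete (range f) := by
    refine isClosed_and_isDiscrete_range_of_eventually_notMem fun x => ?_
    obtain ⟨n, rfl⟩ := he x
    exact ⟨K n, hK n, eventually_atTop.2 ⟨n, fun m hm hfm => hf m (mem_iUnion₂_of_mem hm hfm)⟩⟩
  obtain ⟨haC, haD⟩ := hrange a ha
  obtain ⟨hbC, hbD⟩ := hrange (fun n => (e n)⁻¹ * a n) hb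
  refine ⟨_, haC.union hbC, haD.union hbD haC hbC, eq_univ_of_forall fun g => ?_⟩
  obtain ⟨n, rfl⟩ := he g
  exact ⟨a n, .inl ⟨n, rfl⟩, ((e n)⁻¹ * a n)⁻¹, by simp, by group⟩

theorem exists_isClosed_mem_nhds_measure_lt {X : Type*} [TopologicalSpace X] [RegularSpace X]
    [MeasurableSpace X] (μ : Measure X) [μ.OuterRegular] [NullSingletonClass μ] (x : X)
    {ε : ℝ≥0∞} (hε : 0 < ε) : ∃ K, IsClosed K ∧ K ∈ 𝓝 x ∧ μ K < ε := by
  obtain ⟨V, hxV, hVo, hVμ⟩ :=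
    Set.exists_isOpen_lt_of_lt {x} ε (by rwa [measure_singleton (μ := μ)])
  obtain ⟨K, hK, hKc, hKV⟩ := exists_mem_nhds_isClosed_subset (hVo.mem_nhds (hxV rfl))
  exact ⟨K, hKc, hK, (measure_mono hKV).trans_lt hVμ⟩

theorem exists_isClosed_mem_nhds_measure_biUnion_lt {X : Type*} [TopologicalSpace X]
    [RegularSpace X] [MeasurableSpace X] (μ : Measure X) [μ.OuterRegular] [NullSingletonClass μ]
    (x : ℕ → X) {δ : ℝ≥0∞} (hδ : 0 < δ) :
    ∃ K : ℕ → Set X, (∀ n, IsClosed (K n)) ∧ (∀ n, K n ∈ 𝓝 (x n)) ∧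
      ∀ n, μ (⋃ i ≤ n, K i) < δ := by
  obtain ⟨ε, hε, hεδ⟩ := ENNReal.exists_pos_sum_of_countable' hδ.ne' ℕ
  choose K hKc hKx hKμ using fun n => exists_isClosed_mem_nhds_measure_lt μ (x n) (hε n)
  refine ⟨K, hKc, hKx, fun n => lt_of_le_of_lt ?_ hεδ⟩
  calc μ (⋃ i ≤ n, K i) ≤ μ (⋃ i, K i) := measure_mono (iUnion₂_subset fun i _ => subset_iUnion K i)
    _ ≤ ∑' i, μ (K i) := measure_iUnion_le K
    _ ≤ ∑' i, ε i := ENNReal.tsum_le_tsum fun i => (hKμ i).le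

theorem Dense.exists_mem_notMem_and_inv_mul_notMem {H : Type*} [Group H] [TopologicalSpace H]
    [ContinuousMul H] [MeasurableSpace H] {μ : Measure H} [μ.IsMulLeftInvariant]
    {s C : Set H} (hs : Dense s) (hC : IsClosed C) (hμC : μ C < μ univ / 2) (g : H) :
    ∃ x ∈ s, x ∉ C ∧ g⁻¹ * x ∉ C := by
  have hcover : μ (C ∪ g • C) < μ univ :=
    calc μ (C ∪ g • C) ≤ μ C + μ (g • C) := measure_union_le _ _
      _ = μ C + μ C := by rw [measure_smul]
      _ < μ univ / 2 + μ univ / 2 := ENNReal.add_lt_add hμC hμC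
      _ = μ univ := ENNReal.add_halves _
  have hne : (C ∪ g • C)ᶜ.Nonempty := nonempty_compl.2 fun h => (h ▸ hcover).false
  obtain ⟨x, hxs, hx⟩ := hs.exists_mem_open (hC.union (hC.smul g)).isOpen_compl hne
  exact ⟨x, hxs, fun h => hx (.inl h), fun h => hx (.inr (mem_smul_set_iff_inv_smul_mem.2 h))⟩

/-- A countable dense subgroup `G` of a compact Hausdorff group `H`, with the subspace
topology, has a subset `A` closed and discrete in `G` with `G = A * A⁻¹`. -/
theorem dense_countable_subgroup_of_compact_eq_mul_inv
    (H : Type*) [Group H] [TopologicalSpace H] [IsTopologicalGroup H]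
    [CompactSpace H] [T2Space H]
    (G : Subgroup H) [Countable G] (hdense : Dense (G : Set H)) :
    ∃ A : Set G, IsClosed A ∧ DiscreteTopology A ∧ A * A⁻¹ = Set.univ := by
  by_cases hH : (𝓝[≠] (1 : H)).NeBot
  · borelize H
    let μ : Measure H := .haar
    obtain ⟨e, he⟩ := exists_surjective_nat G
    obtain ⟨K, hKc, hK, hKμ⟩ := exists_isClosed_mem_nhds_measure_biUnion_lt μ (fun n => (e n : H))
      (ENNReal.half_pos (Measure.measure_univ_pos.2 (NeZero.ne μ)).ne')
    have hCc (n : ℕ) : IsClosed (⋃ i ≤ n, K i) := (finite_Iic n).isClosed_biUnion fun i _ => hKc i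
    obtain ⟨A, hAc, hAd, hAA⟩ := exists_isClosed_isDiscrete_mul_inv_eq_univ he
      (K := fun n => (↑) ⁻¹' K n)
      (fun n => continuous_subtype_val.continuousAt.preimage_mem_nhds (hK n)) fun n => by
        obtain ⟨x, hxG, hx, hgx⟩ :=
          hdense.exists_mem_notMem_and_inv_mul_notMem (hCc n) (hKμ n) (e n : H)
        exact ⟨⟨x, hxG⟩, by simpa using hx, by simpa using hgx⟩
    exact ⟨A, hAc, isDiscrete_iff_discreteTopology.1 hAd, hAA⟩
  · have : DiscreteTopology H := discreteTopology_of_isOpen_singleton_one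
      ((isOpen_singleton_iff_punctured_nhds 1).2 (not_neBot.1 hH))
    exact ⟨univ, isClosed_univ, inferInstance, by simp⟩
end

section
/- Every countable Hausdorff topological group G is generated (as a group) by some closed discrete subset of G; that is, there is a closed discrete subset A of G whose generated subgroup is all of G. -/
/-!
If `G` is not discrete, enumerate it as `h₀, h₁, …` and take `A = {aₘ} ∪ {aₘ⁻¹ hₘ}`, which
generates `G`. It is closed and discrete as soon as a neighbourhood of each `hₖ` contains only the
points of index `≤ k`; for `aₘ` with `m > k` this means avoiding two translates of neighbourhoods
of `1` attached to `k`. Non-discreteness lets us shrink neighbourhoods `V₀, V₁, …` of `1` so fast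
that any translate of `Vₙ` contains two translates of `Vₙ₊₁` that no single translate of `Vₙ₊₁`
meets both of. Choosing level by level, a finite family of translates `cₙ Vₙ₊₁`, one per level,
therefore never covers `G`.
-/

open Set Filter Topology Pointwise

theorem isClosed_and_discreteTopology_of_forall_exists_finite_inter {X : Type*}
    [TopologicalSpace X] [T1Space X] {A : Set X} (h : ∀ x, ∃ U ∈ 𝓝 x, (U ∩ A).Finite) :
    IsClosed A ∧ DiscreteTopology A := by
  rw [← isDiscrete_iff_discreteTopology, isClosed_and_discrete_iff]
  intro x
  obtain ⟨U, hU, hUA⟩ := h x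
  have hfar : ((U ∩ A) \ {x})ᶜ ∈ 𝓝 x := hUA.sdiff.isClosed.compl_mem_nhds (by simp)
  rw [disjoint_principal_right]
  filter_upwards [nhdsWithin_le_nhds (inter_mem hU hfar), self_mem_nhdsWithin]
    with y ⟨hyU, hy⟩ hyx hyA using hy ⟨⟨hyU, hyA⟩, hyx⟩

def HasAvoidingTranslates {G : Type*} [Group G] (V : ℕ → Set G) : Prop :=
  ∀ n (g c : G), ∃ g' : G, g' • V (n + 1) ⊆ g • V n ∧ Disjoint (g' • V (n + 1)) (c • V (n + 1))

theorem HasAvoidingTranslates.exists_forall_notMem_smul {G : Type*} [Group G] {V : ℕ → Set G}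
    (hV : HasAvoidingTranslates V) (hV1 : ∀ n, (1 : G) ∈ V n) (c d : ℕ → G) (m : ℕ) :
    ∃ g, ∀ k < m, g ∉ c k • V (2 * k + 1) ∧ g ∉ d k • V (2 * k + 2) := by
  suffices ∃ g, ∀ k < m, Disjoint (g • V (2 * m)) (c k • V (2 * k + 1)) ∧
      Disjoint (g • V (2 * m)) (d k • V (2 * k + 2)) by
    obtain ⟨g, hg⟩ := this
    have hgg : g ∈ g • V (2 * m) := by simpa using smul_mem_smul_set (a := g) (hV1 (2 * m))
    exact ⟨g, fun k hk => ⟨disjoint_left.1 (hg k hk).1 hgg, disjoint_left.1 (hg k hk).2 hgg⟩⟩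
  induction m with
  | zero => simp
  | succ m ih =>
    obtain ⟨g, hg⟩ := ih
    obtain ⟨g₁, hg₁g, hg₁c⟩ := hV (2 * m) g (c m)
    obtain ⟨g₂, hg₂g₁, hg₂d⟩ := hV (2 * m + 1) g₁ (d m)
    have hg₂g : g₂ • V (2 * (m + 1)) ⊆ g • V (2 * m) := hg₂g₁.trans hg₁g
    refine ⟨g₂, fun k hk => ?_⟩
    rcases Nat.lt_succ_iff_lt_or_eq.1 hk with hk | rfl
    · exact ⟨(hg k hk).1.mono_left hg₂g, (hg k hk).2.mono_left hg₂g⟩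
    · exact ⟨hg₁c.mono_left hg₂g₁, hg₂d⟩

section TopologicalGroup

variable {G : Type*} [Group G] [TopologicalSpace G] [IsTopologicalGroup G] [T1Space G]

theorem exists_mem_nhds_one_forall_exists_smul_subset_disjoint [(𝓝[≠] (1 : G)).NeBot]
    {U : Set G} (hU : U ∈ 𝓝 1) :
    ∃ V ∈ 𝓝 (1 : G), ∀ g c : G, ∃ g' : G, g' • V ⊆ g • U ∧ Disjoint (g' • V) (c • V) := by
  obtain ⟨U', hU', hU'U⟩ := exists_nhds_one_split hU
  obtain ⟨x, hx1, hxU'⟩ := Filter.nonempty_of_mem (inter_mem_nhdsWithin {1}ᶜ hU')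
  obtain ⟨W, hW, hWx⟩ := exists_nhds_one_split4 (compl_singleton_mem_nhds (Ne.symm hx1))
  refine ⟨W ∩ W⁻¹ ∩ U', inter_mem (inter_mem hW (inv_mem_nhds_one G hW)) hU', fun g c => ?_⟩
  by_cases hg : Disjoint (g • (W ∩ W⁻¹ ∩ U')) (c • (W ∩ W⁻¹ ∩ U'))
  · refine ⟨g, smul_set_mono fun v hv => ?_, hg⟩
    simpa using hU'U v hv.2 1 (mem_of_mem_nhds hU')
  refine ⟨g * x, ?_, ?_⟩
  · rw [mul_smul]
    exact smul_set_mono <| smul_set_subset_iff.2 fun v hv => hU'U x hxU' v hv.2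
  -- If both `g V` and `g x V` met `c V`, then `x` would lie in `V V⁻¹ V V⁻¹ ⊆ {x}ᶜ`.
  obtain ⟨_, ⟨v₁, hv₁, rfl⟩, w₁, hw₁, h₁⟩ := not_disjoint_iff.1 hg
  rw [disjoint_left]
  rintro _ ⟨v₂, hv₂, rfl⟩ ⟨w₂, hw₂, h₂⟩
  simp only [smul_eq_mul] at h₁ h₂
  apply hWx hv₁.1.1 (mem_inv.1 hw₁.1.2) hw₂.1.1 (mem_inv.1 hv₂.1.2)
  have hc : c = g * v₁ * w₁⁻¹ := eq_mul_inv_of_mul_eq h₁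
  calc v₁ * w₁⁻¹ * w₂ * v₂⁻¹ = g⁻¹ * (c * w₂) * v₂⁻¹ := by rw [hc]; group
    _ = x := by rw [h₂]; group

theorem exists_hasAvoidingTranslates_nhds_one [(𝓝[≠] (1 : G)).NeBot] :
    ∃ V : ℕ → Set G, (∀ n, V n ∈ 𝓝 1) ∧ HasAvoidingTranslates V := by
  choose next hnext hstep using fun U : {U : Set G // U ∈ 𝓝 1} =>
    exists_mem_nhds_one_forall_exists_smul_subset_disjoint U.2
  let V : ℕ → {U : Set G // U ∈ 𝓝 1} :=
    fun n => (fun U => ⟨next U, hnext U⟩)^[n] ⟨univ, univ_mem⟩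
  refine ⟨fun n => (V n).1, fun n => (V n).2, fun n => ?_⟩
  simp only [V, Function.iterate_succ_apply']
  exact hstep _

theorem exists_isClosed_discreteTopology_closure_eq_top [Countable G] [(𝓝[≠] (1 : G)).NeBot] :
    ∃ A : Set G, IsClosed A ∧ DiscreteTopology A ∧ Subgroup.closure A = ⊤ := by
  obtain ⟨h, hh⟩ := exists_surjective_nat G
  obtain ⟨V, hV, hVavoid⟩ := exists_hasAvoidingTranslates_nhds_one (G := G)
  choose a ha using fun m => hVavoid.exists_forall_notMem_smul (fun n => mem_of_mem_nhds (hV n))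
    h (fun k => h m * (h k)⁻¹) m
  let b : ℕ → G := fun m => (a m)⁻¹ * h m
  have hfin : ∀ x, ∃ U ∈ 𝓝 x, (U ∩ (range a ∪ range b)).Finite := by
    intro x
    obtain ⟨k, rfl⟩ := hh x
    have hleft : Tendsto (fun y => (h k)⁻¹ * y) (𝓝 (h k)) (𝓝 1) := by
      simpa using (continuous_const_mul (h k)⁻¹).tendsto (h k)
    have hright : Tendsto (fun y => h k * y⁻¹) (𝓝 (h k)) (𝓝 1) := by
      have : Tendsto (fun y => h k * y⁻¹) (𝓝 (h k)) (𝓝 (h k * (h k)⁻¹)) :=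
        tendsto_const_nhds.mul tendsto_id.inv
      simpa using this
    refine ⟨{y | (h k)⁻¹ * y ∈ V (2 * k + 1) ∧ h k * y⁻¹ ∈ V (2 * k + 2)},
      inter_mem (hleft (hV _)) (hright (hV _)),
      (((finite_Iic k).image a).union ((finite_Iic k).image b)).subset ?_⟩
    rintro _ ⟨⟨hy₁, hy₂⟩, ⟨j, rfl⟩ | ⟨j, rfl⟩⟩
    · refine .inl ⟨j, not_lt.1 fun hkj => (ha j k hkj).1 ?_, rfl⟩
      rwa [mem_smul_set_iff_inv_smul_mem]
    · refine .inr ⟨j, not_lt.1 fun hkj => (ha j k hkj).2 ?_, rfl⟩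
      rw [mem_smul_set_iff_inv_smul_mem]
      simpa [b, mul_assoc] using hy₂
  obtain ⟨hclosed, hdiscrete⟩ := isClosed_and_discreteTopology_of_forall_exists_finite_inter hfin
  refine ⟨_, hclosed, hdiscrete, (Subgroup.eq_top_iff' _).2 fun g => ?_⟩
  obtain ⟨m, rfl⟩ := hh g
  rw [show h m = a m * b m by simp [b]]
  exact mul_mem (Subgroup.subset_closure (.inl ⟨m, rfl⟩)) (Subgroup.subset_closure (.inr ⟨m, rfl⟩))

end TopologicalGroup

/-- Every countable Hausdorff topological group is generated by some closed discrete
subset. -/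
theorem countable_group_generated_by_closed_discrete
    (G : Type*) [Group G] [TopologicalSpace G] [IsTopologicalGroup G]
    [T2Space G] [Countable G] :
    ∃ A : Set G, IsClosed A ∧ DiscreteTopology A ∧ Subgroup.closure A = ⊤ := by
  by_cases hG : (𝓝[≠] (1 : G)).NeBot
  · exact exists_isClosed_discreteTopology_closure_eq_top
  · have : DiscreteTopology G := discreteTopology_of_isOpen_singleton_one <|
      (isOpen_singleton_iff_punctured_nhds 1).2 (not_neBot.1 hG)
    exact ⟨univ, isClosed_univ, inferInstance, Subgroup.closure_univ⟩
end

section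
/- Every countable Hausdorff topological group G has a subset A that is closed, discrete, and thin, such that G = AA⁻¹. -/
/-!
Enumerate `G` as `e₀, e₁, …` and put two points `yₙ` and `eₙ yₙ` into `A` at stage `n`, so that
`eₙ ∈ A * A⁻¹`. If `yₙ` and `eₙ yₙ` avoid `Sₙ Sₙ⁻¹ Sₙ`, where `Sₙ` is the finite set chosen
before, then a quotient of a new point by an old one never lies in `Sₙ Sₙ⁻¹`. Hence a fixed
`g ≠ 1`, once it belongs to some `Sₖ Sₖ⁻¹`, is afterwards only realised by the pairs at the stages
with `eₙ = g^{±1}`, and `A` is thin. If moreover `yₙ` and `eₙ yₙ` avoid `Uₙ`, where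
`U₀ ⊆ U₁ ⊆ ⋯` are open sets exhausting `G`, then `Uₘ ∩ A ⊆ Sₘ`, so `A` is closed and discrete.

Such points exist as long as no `Uₙ ∪ g Uₙ` is cofinite. If some open `V ∋ 1` is not syndetic,
take `Uₙ = {e₀, …, eₙ} V`. Otherwise left covering numbers at a fine scale behave like a Haar
measure: a neighbourhood `V` admitting `m` points with disjoint translates of `V V⁻¹` has measure
at most `1 / m`, so `Uₙ = ⋃ᵢ eᵢ Vᵢ` with `Vᵢ` of measure at most `2⁻⁽ⁱ⁺³⁾` gives `Uₙ ∪ g Uₙ` of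
measure at most `1 / 2`, while finite sets have arbitrarily small measure.
-/

open Pointwise Set

namespace ThinSet

section CoveringNumber

variable {G : Type*} [Group G]

def IsSyndetic (W : Set G) : Prop :=
  ∃ T : Finset G, (univ : Set G) ⊆ T * W

/-- The least number of left translates of `W` covering `S`; it is `0` when there is no finite
cover. -/
noncomputable def leftCoveringNumber (S W : Set G) : ℕ :=
  sInf {n | ∃ T : Finset G, T.card = n ∧ S ⊆ T * W}

variable {S S' V W : Set G}

theorem leftCoveringNumber_le_card {T : Finset G} (h : S ⊆ T * W) :
    leftCoveringNumber S W ≤ T.card :=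
  Nat.sInf_le ⟨T, rfl, h⟩

theorem exists_card_eq_leftCoveringNumber (h : ∃ T : Finset G, S ⊆ T * W) :
    ∃ T : Finset G, T.card = leftCoveringNumber S W ∧ S ⊆ T * W :=
  let ⟨T, hT⟩ := h
  Nat.sInf_mem (s := {n | ∃ T : Finset G, T.card = n ∧ S ⊆ T * W}) ⟨T.card, T, rfl, hT⟩

theorem smul_subset_smul_finset_mul [DecidableEq G] (g : G) {T : Finset G} (h : S ⊆ T * W) :
    g • S ⊆ ↑(g • T) * W := by
  rw [Finset.coe_smul_finset, smul_mul_assoc]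
  exact smul_set_mono h

theorem leftCoveringNumber_smul (g : G) (S W : Set G) :
    leftCoveringNumber (g • S) W = leftCoveringNumber S W := by
  classical
  unfold leftCoveringNumber
  congr! 3 with n
  refine ⟨fun ⟨T, hT, h⟩ => ⟨g⁻¹ • T, ?_, ?_⟩, fun ⟨T, hT, h⟩ => ⟨g • T, ?_, ?_⟩⟩
  · rw [Finset.card_smul_finset, hT]
  · simpa using smul_subset_smul_finset_mul g⁻¹ h
  · rw [Finset.card_smul_finset, hT]
  · exact smul_subset_smul_finset_mul g h

theorem IsSyndetic.exists_card_eq_leftCoveringNumber (hW : IsSyndetic W) (S : Set G) :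
    ∃ T : Finset G, T.card = leftCoveringNumber S W ∧ S ⊆ T * W :=
  ThinSet.exists_card_eq_leftCoveringNumber (Exists.imp (fun _ => (subset_univ S).trans) hW)

theorem leftCoveringNumber_union_le (hW : IsSyndetic W) :
    leftCoveringNumber (S ∪ S') W ≤ leftCoveringNumber S W + leftCoveringNumber S' W := by
  classical
  obtain ⟨T, hT, hS⟩ := hW.exists_card_eq_leftCoveringNumber S
  obtain ⟨T', hT', hS'⟩ := hW.exists_card_eq_leftCoveringNumber S'
  calc leftCoveringNumber (S ∪ S') W ≤ (T ∪ T').card := by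
        refine leftCoveringNumber_le_card ?_
        rw [Finset.coe_union, union_mul]
        exact union_subset_union hS hS'
    _ ≤ _ := hT ▸ hT' ▸ Finset.card_union_le T T'

theorem leftCoveringNumber_biUnion_le (hW : IsSyndetic W) {ι : Type*}
    (s : Finset ι) (S : ι → Set G) :
    leftCoveringNumber (⋃ i ∈ s, S i) W ≤ ∑ i ∈ s, leftCoveringNumber (S i) W := by
  classical
  induction s using Finset.induction_on with
  | empty => simpa using leftCoveringNumber_le_card (T := ∅) (empty_subset (_ * W))
  | insert i s hi ih =>
    rw [Finset.set_biUnion_insert, Finset.sum_insert hi]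
    exact (leftCoveringNumber_union_le hW).trans (Nat.add_le_add_left ih _)

theorem one_le_leftCoveringNumber (hW : IsSyndetic W) (hS : S.Nonempty) :
    1 ≤ leftCoveringNumber S W := by
  obtain ⟨T, hT, hST⟩ := hW.exists_card_eq_leftCoveringNumber S
  obtain ⟨x, hx⟩ := hS
  obtain ⟨t, ht, -⟩ := hST hx
  exact hT ▸ Finset.card_pos.mpr ⟨t, ht⟩

theorem card_mul_leftCoveringNumber_le (hW : IsSyndetic W) (hWV : W ⊆ V) {P : Finset G}
    (hP : (P : Set G).PairwiseDisjoint (· • (V * V⁻¹))) :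
    P.card * leftCoveringNumber V W ≤ leftCoveringNumber univ W := by
  classical
  obtain ⟨T, hT, hcov⟩ := hW.exists_card_eq_leftCoveringNumber univ
  set Tₛ : G → Finset G := fun s => T.filter (· ∈ s • (V * W⁻¹))
  have hsub (s : G) : s • V ⊆ ↑(Tₛ s) * W := by
    rintro _ ⟨v, hv, rfl⟩
    obtain ⟨τ, hτ, w, hw, hτw⟩ := hcov (mem_univ (s • v))
    refine ⟨τ, Finset.mem_filter.mpr ⟨hτ, v * w⁻¹, mul_mem_mul hv (inv_mem_inv.mpr hw), ?_⟩,
      w, hw, hτw⟩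
    simp only [smul_eq_mul] at hτw ⊢
    rw [← mul_assoc, ← hτw, mul_inv_cancel_right]
  have hdisj : (P : Set G).PairwiseDisjoint Tₛ := by
    intro s hs t ht hst
    have hVW : V * W⁻¹ ⊆ V * V⁻¹ := mul_subset_mul_left (inv_subset_inv.mpr hWV)
    exact Finset.disjoint_filter.mpr fun τ _ hτs hτt =>
      Set.disjoint_left.mp (hP hs ht hst) (smul_set_mono hVW hτs) (smul_set_mono hVW hτt)
  calc P.card * leftCoveringNumber V W = ∑ s ∈ P, leftCoveringNumber (s • V) W := by
        simp only [leftCoveringNumber_smul, Finset.sum_const, smul_eq_mul]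
    _ ≤ ∑ s ∈ P, (Tₛ s).card := Finset.sum_le_sum fun s _ => leftCoveringNumber_le_card (hsub s)
    _ = (P.biUnion Tₛ).card := (Finset.card_biUnion hdisj).symm
    _ ≤ T.card :=
        Finset.card_le_card (Finset.biUnion_subset.mpr fun _ _ => Finset.filter_subset _ _)
    _ = leftCoveringNumber univ W := hT

end CoveringNumber

theorem sum_le_of_two_pow_succ_mul_le {c : ℕ → ℕ} {N n : ℕ}
    (h : ∀ i < n, 2 ^ (i + 1) * c i ≤ N) : ∑ i ∈ Finset.range n, c i ≤ N := by
  have hc (i : ℕ) (hi : i ∈ Finset.range n) : (c i : ℝ) ≤ N / 2 * (1 / 2) ^ i := by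
    have h' : (2 ^ (i + 1) * c i : ℝ) ≤ N := by exact_mod_cast h i (Finset.mem_range.mp hi)
    rw [div_mul_eq_mul_div, one_div_pow, mul_one_div, div_div, ← pow_succ,
      le_div_iff₀ (by positivity)]
    linarith
  have hsum : (∑ i ∈ Finset.range n, c i : ℝ) ≤ N := calc
    (∑ i ∈ Finset.range n, c i : ℝ) ≤ ∑ i ∈ Finset.range n, N / 2 * (1 / 2 : ℝ) ^ i :=
        Finset.sum_le_sum hc
    _ ≤ N / 2 * 2 := by
        rw [← Finset.mul_sum]
        gcongr
        exact sum_geometric_two_le n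
    _ = N := by ring
  exact_mod_cast hsum

section TopologicalGroup

variable {G : Type*} [Group G] [TopologicalSpace G] [IsTopologicalGroup G]

theorem exists_isOpen_pairwiseDisjoint_smul_mul_inv [T2Space G] (P : Finset G) :
    ∃ V : Set G, IsOpen V ∧ (1 : G) ∈ V ∧ (P : Set G).PairwiseDisjoint (· • (V * V⁻¹)) := by
  obtain ⟨U, hU, hUdisj⟩ := P.finite_toSet.t2_separation
  have hO : (⋂ s ∈ P, s⁻¹ • U s) ∈ nhds (1 : G) :=
    (Filter.biInter_finset_mem P).mpr fun s _ =>
      ((hU s).2.smul s⁻¹).mem_nhds (mem_inv_smul_set_iff.mpr (by simpa using (hU s).1))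
  obtain ⟨V₀, hV₀, hV₀O⟩ := exists_nhds_split_inv hO
  obtain ⟨V, hVV₀, hVo, hV1⟩ := mem_nhds_iff.mp hV₀
  have hVU (s : G) (hs : s ∈ P) : s • (V * V⁻¹) ⊆ U s := by
    rintro _ ⟨_, ⟨v, hv, w, hw, rfl⟩, rfl⟩
    simpa [mem_inv_smul_set_iff] using mem_iInter₂.mp (hV₀O v (hVV₀ hv) w⁻¹ (hVV₀ hw)) s hs
  exact ⟨V, hVo, hV1, fun s hs t ht hst => (hUdisj hs ht hst).mono (hVU s hs) (hVU t ht)⟩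

theorem exists_isOpen_forall_mul_leftCoveringNumber_le [T2Space G] [Infinite G] (m : ℕ) :
    ∃ V : Set G, IsOpen V ∧ (1 : G) ∈ V ∧ ∀ W ⊆ V, IsSyndetic W →
      m * leftCoveringNumber V W ≤ leftCoveringNumber univ W := by
  obtain ⟨P, rfl⟩ := Infinite.exists_subset_card_eq G m
  obtain ⟨V, hVo, hV1, hP⟩ := exists_isOpen_pairwiseDisjoint_smul_mul_inv P
  exact ⟨V, hVo, hV1, fun W hWV hW => card_mul_leftCoveringNumber_le hW hWV hP⟩

end TopologicalGroup

section SmallOpenExhaustion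

variable {G : Type*} [Group G]

theorem infinite_compl_of_subset_finset_mul {S V : Set G} (hV1 : (1 : G) ∈ V)
    (hV : ¬ IsSyndetic V) {T : Finset G} (hS : S ⊆ T * V) : Sᶜ.Infinite := by
  classical
  intro hfin
  refine hV ⟨T ∪ hfin.toFinset, fun x _ => ?_⟩
  rw [Finset.coe_union, union_mul, hfin.coe_toFinset]
  by_cases hx : x ∈ S
  exacts [Or.inl (hS hx), Or.inr (subset_mul_left _ hV1 hx)]

theorem infinite_compl_of_forall_exists_leftCoveringNumber_add_lt {S : Set G}
    (h : ∀ k : ℕ, ∃ W : Set G, (1 : G) ∈ W ∧ IsSyndetic W ∧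
      leftCoveringNumber S W + k < leftCoveringNumber univ W) :
    Sᶜ.Infinite := by
  intro hfin
  obtain ⟨W, hW1, hW, hlt⟩ := h hfin.toFinset.card
  have hcompl : Sᶜ ⊆ hfin.toFinset * W := by
    rw [hfin.coe_toFinset]
    exact subset_mul_left _ hW1
  have := calc leftCoveringNumber univ W
      = leftCoveringNumber (S ∪ Sᶜ) W := by rw [union_compl_self]
    _ ≤ leftCoveringNumber S W + leftCoveringNumber Sᶜ W := leftCoveringNumber_union_le hW
    _ ≤ leftCoveringNumber S W + hfin.toFinset.card :=
        Nat.add_le_add_left (leftCoveringNumber_le_card hcompl) _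
  omega

variable [TopologicalSpace G]

structure IsSmallOpenExhaustion (U : ℕ → Set G) : Prop where
  isOpen : ∀ n, IsOpen (U n)
  mono : Monotone U
  exhaustive : ∀ x, ∃ n, x ∈ U n
  infinite_compl_union_smul : ∀ n (g : G), (U n ∪ g • U n)ᶜ.Infinite

variable [IsTopologicalGroup G]

theorem exists_isSmallOpenExhaustion_of_not_isSyndetic {e : ℕ → G} (he : Function.Surjective e)
    {V : Set G} (hVo : IsOpen V) (hV1 : (1 : G) ∈ V) (hV : ¬ IsSyndetic V) :
    ∃ U : ℕ → Set G, IsSmallOpenExhaustion U := by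
  classical
  refine ⟨fun n => ↑((Finset.range (n + 1)).image e) * V,
    ⟨fun n => hVo.mul_left, fun m n hmn => ?_, fun x => ?_, fun n g => ?_⟩⟩
  · exact mul_subset_mul_right (Finset.coe_subset.mpr
      (Finset.image_subset_image (Finset.range_subset_range.mpr (by omega))))
  · obtain ⟨n, rfl⟩ := he x
    exact ⟨n, mem_mul.mpr ⟨e n,
      Finset.mem_coe.mpr (Finset.mem_image_of_mem e (Finset.self_mem_range_succ n)),
      1, hV1, mul_one _⟩⟩
  · refine infinite_compl_of_subset_finset_mul hV1 hV
      (T := (Finset.range (n + 1)).image e ∪ g • (Finset.range (n + 1)).image e) ?_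
    rw [Finset.coe_union, union_mul, Finset.coe_smul_finset, smul_mul_assoc]

theorem exists_isSmallOpenExhaustion_of_forall_isSyndetic [T2Space G] [Infinite G] {e : ℕ → G}
    (he : Function.Surjective e)
    (hG : ∀ W : Set G, IsOpen W → (1 : G) ∈ W → IsSyndetic W) :
    ∃ U : ℕ → Set G, IsSmallOpenExhaustion U := by
  choose V hVo hV1 hV using fun i : ℕ =>
    exists_isOpen_forall_mul_leftCoveringNumber_le (G := G) (2 ^ (i + 1) * 4)
  refine ⟨fun n => ⋃ i ∈ Finset.range (n + 1), e i • V i,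
    ⟨fun n => ?_, fun m n hmn => ?_, fun x => ?_, fun n g => ?_⟩⟩
  · exact isOpen_biUnion fun i _ => (hVo i).smul (e i)
  · exact biUnion_subset_biUnion_left (Finset.coe_subset.mpr
      (Finset.range_subset_range.mpr (by omega)))
  · obtain ⟨n, rfl⟩ := he x
    exact ⟨n, mem_iUnion₂.mpr ⟨n, Finset.self_mem_range_succ n,
      by simpa using smul_mem_smul_set (a := e n) (hV1 n)⟩⟩
  refine infinite_compl_of_forall_exists_leftCoveringNumber_add_lt fun k => ?_
  obtain ⟨V', hV'o, hV'1, hV'⟩ :=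
    exists_isOpen_forall_mul_leftCoveringNumber_le (G := G) (2 * k + 1)
  set W := V' ∩ ⋂ i ∈ Finset.range (n + 1), V i
  have hW1 : (1 : G) ∈ W := ⟨hV'1, mem_iInter₂.mpr fun i _ => hV1 i⟩
  have hW := hG W (hV'o.inter (isOpen_biInter_finset fun i _ => hVo i)) hW1
  have hk : 2 * k + 1 ≤ leftCoveringNumber univ W :=
    (Nat.le_mul_of_pos_right _ (one_le_leftCoveringNumber hW ⟨1, hV'1⟩)).trans
      (hV' W inter_subset_left hW)
  have hsum : 4 * ∑ i ∈ Finset.range (n + 1), leftCoveringNumber (V i) W ≤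
      leftCoveringNumber univ W := by
    rw [Finset.mul_sum]
    refine sum_le_of_two_pow_succ_mul_le fun i hi => ?_
    rw [← mul_assoc]
    exact hV i W (inter_subset_right.trans (biInter_subset_of_mem (Finset.mem_range.mpr hi))) hW
  have hU : leftCoveringNumber ((⋃ i ∈ Finset.range (n + 1), e i • V i) ∪
      g • ⋃ i ∈ Finset.range (n + 1), e i • V i) W ≤
      2 * ∑ i ∈ Finset.range (n + 1), leftCoveringNumber (V i) W := by
    refine (leftCoveringNumber_union_le hW).trans ?_
    rw [leftCoveringNumber_smul, ← two_mul]
    refine Nat.mul_le_mul_left 2 ((leftCoveringNumber_biUnion_le hW _ _).trans_eq ?_)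
    simp only [leftCoveringNumber_smul]
  exact ⟨W, hW1, hW, by omega⟩

theorem exists_isSmallOpenExhaustion [T2Space G] [Countable G] [Infinite G] :
    ∃ U : ℕ → Set G, IsSmallOpenExhaustion U := by
  obtain ⟨e, he⟩ := exists_surjective_nat G
  by_cases hG : ∀ W : Set G, IsOpen W → (1 : G) ∈ W → IsSyndetic W
  · exact exists_isSmallOpenExhaustion_of_forall_isSyndetic he hG
  · push Not at hG
    obtain ⟨V, hVo, hV1, hV⟩ := hG
    exact exists_isSmallOpenExhaustion_of_not_isSyndetic he hVo hV1 hV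

end SmallOpenExhaustion

section Construction

variable {G : Type*} [Group G] {e y : ℕ → G} {S : ℕ → Set G}

theorem finite_of_eq_insert (hS0 : S 0 = ∅)
    (hS : ∀ n, S (n + 1) = insert (y n) (insert (e n * y n) (S n))) (n : ℕ) : (S n).Finite := by
  induction n with
  | zero => simp [hS0]
  | succ n ih => simpa [hS n] using ih

theorem monotone_of_eq_insert (hS : ∀ n, S (n + 1) = insert (y n) (insert (e n * y n) (S n))) :
    Monotone S :=
  monotone_nat_of_le_succ fun n => hS n ▸ (subset_insert _ _).trans (subset_insert _ _)

theorem iUnion_mul_inv_eq_univ (hS : ∀ n, S (n + 1) = insert (y n) (insert (e n * y n) (S n)))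
    (he : Function.Surjective e) : (⋃ n, S n) * (⋃ n, S n)⁻¹ = univ := by
  refine eq_univ_of_forall fun g => ?_
  obtain ⟨n, rfl⟩ := he g
  have hy : y n ∈ ⋃ n, S n := mem_iUnion.mpr ⟨n + 1, by simp [hS n]⟩
  have ha : e n * y n ∈ ⋃ n, S n := mem_iUnion.mpr ⟨n + 1, by simp [hS n]⟩
  exact ⟨e n * y n, ha, (y n)⁻¹, inv_mem_inv.mpr hy, mul_inv_cancel_right _ _⟩

theorem mem_and_mul_mem_of_mem_succ (hS : ∀ n, S (n + 1) = insert (y n) (insert (e n * y n) (S n)))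
    (hy : ∀ n, y n ∉ S n * (S n)⁻¹ * S n ∧ e n * y n ∉ S n * (S n)⁻¹ * S n)
    {n : ℕ} {g x : G} (hg : g ≠ 1) (hgS : g ∈ S n * (S n)⁻¹)
    (hx : x ∈ S (n + 1)) (hgx : g * x ∈ S (n + 1)) :
    (x ∈ S n ∧ g * x ∈ S n) ∨ g = e n ∨ g = (e n)⁻¹ := by
  have hg' : g⁻¹ ∈ S n * (S n)⁻¹ := by simpa [mul_inv_rev] using inv_mem_inv.mpr hgS
  have hQS {z : G} (hz : z ∈ S n) : g * z ∈ S n * (S n)⁻¹ * S n ∧ g⁻¹ * z ∈ S n * (S n)⁻¹ * S n :=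
    ⟨mul_mem_mul hgS hz, mul_mem_mul hg' hz⟩
  rw [hS] at hx hgx
  rcases hx with rfl | rfl | hx <;> rcases hgx with h | h | h
  · exact absurd (mul_eq_right.mp h) hg
  · exact Or.inr (Or.inl (mul_right_cancel h))
  · exact absurd (by simpa using (hQS h).2) (hy n).1
  · rw [← mul_assoc, mul_eq_right] at h
    exact Or.inr (Or.inr (eq_inv_of_mul_eq_one_left h))
  · exact absurd (mul_eq_right.mp h) hg
  · exact absurd (by simpa using (hQS h).2) (hy n).2
  · exact absurd (h ▸ (hQS hx).1) (hy n).1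
  · exact absurd (h ▸ (hQS hx).1) (hy n).2
  · exact Or.inl ⟨hx, h⟩

theorem finite_smul_iUnion_inter_iUnion (hS0 : S 0 = ∅)
    (hS : ∀ n, S (n + 1) = insert (y n) (insert (e n * y n) (S n)))
    (hy : ∀ n, y n ∉ S n * (S n)⁻¹ * S n ∧ e n * y n ∉ S n * (S n)⁻¹ * S n)
    (he : Function.Injective e) {g : G} (hg : g ≠ 1) :
    (g • (⋃ n, S n) ∩ ⋃ n, S n).Finite := by
  have hmono := monotone_of_eq_insert hS
  rcases (g • (⋃ n, S n) ∩ ⋃ n, S n).eq_empty_or_nonempty with h | ⟨_, ⟨x₀, hx₀, rfl⟩, hgx₀⟩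
  · exact h ▸ finite_empty
  obtain ⟨i, hi⟩ := mem_iUnion.mp hx₀
  obtain ⟨j, hj⟩ := mem_iUnion.mp hgx₀
  have hk : g ∈ S (i + j) * (S (i + j))⁻¹ :=
    ⟨g • x₀, hmono (by omega) hj, x₀⁻¹, inv_mem_inv.mpr (hmono (by omega) hi), by simp⟩
  obtain ⟨b, hb⟩ := ((toFinite {g, g⁻¹}).preimage he.injOn).bddAbove
  set M := i + j + b + 1
  have hdesc (d : ℕ) {x : G} (hx : x ∈ S (M + d)) (hgx : g * x ∈ S (M + d)) : x ∈ S M := by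
    induction d with
    | zero => exact hx
    | succ d ih =>
      have hgM : g ∈ S (M + d) * (S (M + d))⁻¹ :=
        mul_subset_mul (hmono (by omega)) (inv_subset_inv.mpr (hmono (by omega))) hk
      rcases mem_and_mul_mem_of_mem_succ hS hy hg hgM hx hgx with h | h
      · exact ih h.1 h.2
      · have : M + d ≤ b := hb (by rcases h with rfl | rfl <;> simp)
        omega
  refine ((finite_of_eq_insert hS0 hS M).smul_set (a := g)).subset ?_
  rintro _ ⟨⟨x, hx, rfl⟩, hgx⟩
  obtain ⟨i', hi'⟩ := mem_iUnion.mp hx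
  obtain ⟨j', hj'⟩ := mem_iUnion.mp hgx
  exact smul_mem_smul_set (hdesc (i' + j') (hmono (by omega) hi') (hmono (by omega) hj'))

theorem inter_iUnion_subset (hS : ∀ n, S (n + 1) = insert (y n) (insert (e n * y n) (S n)))
    {U : ℕ → Set G} (hU : Monotone U) (hyU : ∀ n, y n ∉ U n ∧ e n * y n ∉ U n) (m : ℕ) :
    U m ∩ ⋃ n, S n ⊆ S m := by
  rintro x ⟨hxU, hx⟩
  obtain ⟨j, hj⟩ := mem_iUnion.mp hx
  suffices ∀ d, x ∈ S (m + d) → x ∈ S m from this j (monotone_of_eq_insert hS (by omega) hj)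
  intro d hd
  induction d with
  | zero => exact hd
  | succ d ih =>
    rw [← add_assoc, hS] at hd
    rcases hd with rfl | rfl | hd
    · exact absurd (hU (by omega) hxU) (hyU _).1
    · exact absurd (hU (by omega) hxU) (hyU _).2
    · exact ih hd

end Construction

theorem isClosed_and_discreteTopology_of_forall_finite_inter {X : Type*} [TopologicalSpace X]
    [T1Space X] {A : Set X} (h : ∀ x, ∃ W ∈ nhds x, (W ∩ A).Finite) :
    IsClosed A ∧ DiscreteTopology A := by
  rw [← isDiscrete_iff_discreteTopology, isClosed_and_discrete_iff]
  intro x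
  obtain ⟨W, hW, hfin⟩ := h x
  rw [Filter.disjoint_principal_right]
  filter_upwards [nhdsWithin_le_nhds hW,
    nhdsWithin_le_nhds ((hfin.sdiff (t := {x})).isClosed.compl_mem_nhds fun h => h.2 rfl),
    self_mem_nhdsWithin] with z hzW hz hzx hzA
  exact hz ⟨⟨hzW, hzA⟩, hzx⟩

theorem IsSmallOpenExhaustion.exists_isClosed_discreteTopology_thin_mul_inv_eq_univ
    {G : Type*} [Group G] [TopologicalSpace G] [T1Space G] {U : ℕ → Set G}
    (hU : IsSmallOpenExhaustion U) (e : ℕ ≃ G) :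
    ∃ A : Set G, IsClosed A ∧ DiscreteTopology A ∧
      (∀ g : G, g ≠ 1 → (g • A ∩ A).Finite) ∧ A * A⁻¹ = univ := by
  -- Stated for all `S`, so that `choose` yields a step function defined on every set.
  have hnext (n : ℕ) (S : Set G) : ∃ y, S.Finite →
      (y ∉ S * S⁻¹ * S ∧ e n * y ∉ S * S⁻¹ * S) ∧ y ∉ U n ∧ e n * y ∉ U n := by
    by_cases hSf : S.Finite
    · have hT := (hSf.mul hSf.inv).mul hSf
      obtain ⟨y, hyU, hyT⟩ := (hU.infinite_compl_union_smul n (e n)⁻¹).exists_notMem_finite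
        (hT.union (hT.smul_set (a := (e n)⁻¹)))
      simp only [mem_compl_iff, mem_union, mem_inv_smul_set_iff, not_or, smul_eq_mul] at hyU hyT
      exact ⟨y, fun _ => ⟨hyT, hyU⟩⟩
    · exact ⟨1, fun h => absurd h hSf⟩
  choose next hnext using hnext
  obtain ⟨S, hS0, hS⟩ : ∃ S : ℕ → Set G, S 0 = ∅ ∧
      ∀ n, S (n + 1) = insert (next n (S n)) (insert (e n * next n (S n)) (S n)) :=
    ⟨fun n => Nat.rec ∅ (fun n S => insert (next n S) (insert (e n * next n S) S)) n,
      rfl, fun _ => rfl⟩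
  have hy (n : ℕ) := hnext n (S n) (finite_of_eq_insert hS0 hS n)
  obtain ⟨hclosed, hdiscrete⟩ := isClosed_and_discreteTopology_of_forall_finite_inter
    (A := ⋃ n, S n) fun x => by
      obtain ⟨m, hm⟩ := hU.exhaustive x
      exact ⟨U m, (hU.isOpen m).mem_nhds hm, (finite_of_eq_insert hS0 hS m).subset
        (inter_iUnion_subset hS hU.mono (fun n => (hy n).2) m)⟩
  exact ⟨⋃ n, S n, hclosed, hdiscrete,
    fun g hg => finite_smul_iUnion_inter_iUnion hS0 hS (fun n => (hy n).1) e.injective hg,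
    iUnion_mul_inv_eq_univ hS e.surjective⟩

end ThinSet

/-- Every countable Hausdorff topological group `G` has a subset `A` that is closed,
discrete, and thin (`g • A ∩ A` is finite for each `g ≠ 1`) such that `G = A * A⁻¹`. -/
theorem countable_group_eq_mul_inv_of_thin_closed_discrete
    (G : Type*) [Group G] [TopologicalSpace G] [IsTopologicalGroup G]
    [T2Space G] [Countable G] :
    ∃ A : Set G, IsClosed A ∧ DiscreteTopology A ∧
      (∀ g : G, g ≠ 1 → (g • A ∩ A).Finite) ∧ A * A⁻¹ = Set.univ := by
  rcases finite_or_infinite G with _ | _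
  · exact ⟨univ, isClosed_univ, inferInstance, fun g _ => toFinite _, by simp⟩
  · obtain ⟨e⟩ := nonempty_equiv_of_countable (α := ℕ) (β := G)
    obtain ⟨U, hU⟩ := ThinSet.exists_isSmallOpenExhaustion (G := G)
    exact hU.exists_isClosed_discreteTopology_thin_mul_inv_eq_univ e
end
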